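/- In the metric space constructed from a graph G by δ(x,y) ∈ {0,1,2} (distance 1 exactly on edges), a subset D ⊆ V eliminates all of V for the query q with radius r < 1 via pivoting lower bounds (i.e., every x ∈ V \ D satisfies max_{p∈D} (δ(q,p) − δ(p,x)) ≥ 1) if and only if D is a dominating set of G. Consequently, the minimum number of pivots needed equals the domination number γ(G). -/
import Mathlib


/-- The reduction metric: distance 0 on equal points, 1 on edges, 2 otherwise,
on `Option V` where `none` plays the role of the query `q ∉ V`. -/
def gdist {V : Type*} [DecidableEq V] (G : SimpleGraph V) [DecidableRel G.Adj] :
    Option V → Option V → ℝ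
  | x, y =>
    if x = y then 0
    else
      match x, y with
      | some a, some b => if G.Adj a b then 1 else 2
      | _, _ => 2

lemma gdist_key {V : Type*} [DecidableEq V] (G : SimpleGraph V) [DecidableRel G.Adj]
    {p x : V} (h : p ≠ x) :
    (1 ≤ gdist G none (some p) - gdist G (some p) (some x)) ↔ G.Adj p x := by
  have h1 : gdist G none (some p) = 2 := by simp [gdist]
  have h2 : gdist G (some p) (some x) = if G.Adj p x then 1 else 2 := by
    simp [gdist, h]
  rw [h1, h2]
  by_cases hadj : G.Adj p x <;> simp [hadj] <;> norm_num

/-- D eliminates all of V for query q with radius r < 1 via pivoting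
lower bounds iff D is a dominating set of G; hence the minimum number of pivots
equals the domination number γ(G). -/
theorem stmt5 {V : Type*} [Fintype V] [DecidableEq V]
    (G : SimpleGraph V) [DecidableRel G.Adj] :
    (∀ D : Finset V,
      ((∀ x : V, x ∉ D → ∃ p ∈ D, 1 ≤ gdist G none (some p) - gdist G (some p) (some x)) ↔
        (∀ x : V, x ∉ D → ∃ p ∈ D, G.Adj p x))) ∧
    sInf {n : ℕ | ∃ D : Finset V,
        (∀ x : V, x ∉ D → ∃ p ∈ D, 1 ≤ gdist G none (some p) - gdist G (some p) (some x)) ∧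
        D.card = n}
      = sInf {n : ℕ | ∃ D : Finset V,
        (∀ x : V, x ∉ D → ∃ p ∈ D, G.Adj p x) ∧ D.card = n} := by
  have key : ∀ D : Finset V,
      ((∀ x : V, x ∉ D → ∃ p ∈ D, 1 ≤ gdist G none (some p) - gdist G (some p) (some x)) ↔
        (∀ x : V, x ∉ D → ∃ p ∈ D, G.Adj p x)) := by
    intro D
    constructor
    · intro h x hx
      obtain ⟨p, hp, hle⟩ := h x hx
      exact ⟨p, hp, (gdist_key G (by rintro rfl; exact hx hp)).mp hle⟩
    · intro h x hx
      obtain ⟨p, hp, hadj⟩ := h x hx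
      exact ⟨p, hp, (gdist_key G (by rintro rfl; exact hx hp)).mpr hadj⟩
  refine ⟨key, ?_⟩
  congr 1
  ext n
  simp only [Set.mem_setOf_eq]
  exact exists_congr fun D => and_congr_left fun _ => key D
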